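/- arXiv:2404.18830 — 3 statements merged into one kernel-verified Lean document; each statement's English description precedes it below -/
import Mathlib

section
/- Box moves on chains of i-boxes are involutions: if 𝔠 = (𝔠_k) is a chain of i-boxes of length l ≤ ∞ and s is an index with 1 ≤ s < l such that the i-box 𝔠_s is movable, then the i-box at position s of the chain ν_s(𝔠) is again movable and ν_s(ν_s(𝔠)) = 𝔠. -/
/-!
Box moves on chains of i-boxes are involutions.

A chain of i-boxes of length `l` is encoded (bijectively) by a pair consisting of its
root `c : ℤ` (the singleton first box) and its sequence of expansion operators
`E : ℕ → Bool` where the relevant positions are `1 ≤ k < l` (`false` = `L`, `true` = `R`).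
-/

/-- The encoding of a chain of i-boxes: a root `c : ℤ` together with a sequence of
expansion operators (`false` = left `L`, `true` = right `R`), the relevant positions
being `1 ≤ k < l`. -/
abbrev ChainPair : Type := ℤ × (ℕ → Bool)

/-- The `i`-box at position `s` (with `1 ≤ s < l`) of the chain encoded by `p` is
movable iff `s = 1`, or `s ≥ 2` and `E (s-1) ≠ E s`. -/
def Movable (p : ChainPair) (s : ℕ) : Prop :=
  s = 1 ∨ (2 ≤ s ∧ p.2 (s - 1) ≠ p.2 s)

/-- The box move `ν_s` on the encoding `(c, E)` of a chain of i-boxes: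
`c' = c + 1` if `s = 1` and `E 1 = R`, `c' = c - 1` if `s = 1` and `E 1 = L`,
`c' = c` otherwise; and `E'` swaps the values `L`/`R` at the positions `s - 1` and `s`. -/
def boxMove (s : ℕ) (p : ChainPair) : ChainPair :=
  (if s = 1 then (if p.2 1 then p.1 + 1 else p.1 - 1) else p.1,
   fun k => if k = s - 1 ∨ k = s then !(p.2 k) else p.2 k)

/-- Box moves are involutions: if `𝔠_s` is movable (`1 ≤ s < l`), then the `i`-box at
position `s` of `ν_s 𝔠` is again movable, and `ν_s (ν_s 𝔠) = 𝔠`. -/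
theorem boxMove_involutive (l : ℕ) (p : ChainPair) (s : ℕ)
    (hs1 : 1 ≤ s) (hsl : s < l) (hmov : Movable p s) :
    Movable (boxMove s p) s ∧ boxMove s (boxMove s p) = p := by
  constructor
  · rcases hmov with h | ⟨h2, hne⟩
    · exact Or.inl h
    · refine Or.inr ⟨h2, ?_⟩
      simp only [boxMove]
      simp only [eq_self_iff_true, or_true, true_or, if_true, ne_eq, Bool.not_not,
        Bool.not_inj_iff]
      exact hne
  · refine Prod.ext ?_ (funext fun k => ?_)
    · simp only [boxMove]
      by_cases h1 : s = 1
      · subst h1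
        by_cases h : p.2 1 = true <;> simp [h]
      · simp [h1]
    · simp only [boxMove]
      by_cases hk : k = s - 1 ∨ k = s <;> simp [hk]
end

section
/- Let R = kQ'/I be a finite-dimensional algebra given by a quiver with admissible ideal, and let M, N be R-modules. Suppose (1) M admits a minimal projective resolution 0 → e_b R → e_a R → M → 0 for vertices a, b of Q'; (2) dim_k (N e_b) ≤ 1; (3) there is an element α ∈ R spanning e_a R e_b as a k-vector space. Then Ext¹_R(M, N) = 0 if and only if N e_b = 0 or N(α) ≠ 0 (i.e., the action of α on N, viewed as a map N e_a → N e_b, is nonzero). -/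
/-!
Ext-vanishing criterion: let `R = kQ'/I` be a finite-dimensional algebra given by a
quiver with admissible ideal (formalized: a finite-dimensional `k`-algebra `R` with
idempotents `e_a`, `e_b`), and let `M`, `N` be (right) `R`-modules.  Suppose
(1) `M` has a minimal projective resolution `0 → e_b R → e_a R → M → 0`;
(2) `dim_k (N e_b) ≤ 1`;
(3) some `α ∈ e_a R e_b` spans `e_a R e_b` over `k`.
Then `Ext¹_R(M,N) = 0` iff `N e_b = 0` or `N(α) ≠ 0`.

Right `R`-modules are formalized as modules over `Rᵐᵒᵖ`, and `e R` as
`Submodule.span Rᵐᵒᵖ {e}` of `R`.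
-/

open CategoryTheory MulOpposite


section Alg
variable {R : Type} [Ring R]

/-- right multiplication map `R → N`, `r ↦ op r • v`, as `Rᵐᵒᵖ`-linear map. -/
def rmul {N : Type} [AddCommGroup N] [Module Rᵐᵒᵖ N] (v : N) : R →ₗ[Rᵐᵒᵖ] N where
  toFun r := (op r) • v
  map_add' x y := by
    show op (x + y) • v = op x • v + op y • v
    rw [show op (x + y) = op x + op y from rfl, add_smul]
  map_smul' a x := by
    show op (a • x) • v = a • (op x • v)
    rw [show op (a • x) = a * op x from rfl, mul_smul]

variable (e : R)

lemma mem_span_idem {x : R} (hx : x ∈ Submodule.span Rᵐᵒᵖ {e}) : ∃ r, x = e * r := by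
  rw [Submodule.mem_span_singleton] at hx
  obtain ⟨a, ha⟩ := hx
  exact ⟨a.unop, by rw [← ha]; rfl⟩

lemma e_mul_of_mem (he : IsIdempotentElem e) {x : R}
    (hx : x ∈ Submodule.span Rᵐᵒᵖ {e}) : e * x = x := by
  obtain ⟨r, rfl⟩ := mem_span_idem e hx
  rw [← mul_assoc, he]

/-- the canonical generator of `span {e}`. -/
def gen : ↥(Submodule.span Rᵐᵒᵖ {e}) := ⟨e, Submodule.mem_span_singleton_self e⟩

lemma smul_gen (r : R) : ((op r • gen e : ↥(Submodule.span Rᵐᵒᵖ {e})) : R) = e * r := rfl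

/-- a linear map on `span {e}` is determined by its value on the generator. -/
lemma eq_of_gen_eq {N : Type} [AddCommGroup N] [Module Rᵐᵒᵖ N]
    (ψ₁ ψ₂ : ↥(Submodule.span Rᵐᵒᵖ {e}) →ₗ[Rᵐᵒᵖ] N)
    (h : ψ₁ (gen e) = ψ₂ (gen e)) : ψ₁ = ψ₂ := by
  ext ⟨x, hx⟩
  rw [Submodule.mem_span_singleton] at hx
  obtain ⟨a, ha⟩ := hx
  have : (⟨x, by rw [Submodule.mem_span_singleton]; exact ⟨a, ha⟩⟩ :
      ↥(Submodule.span Rᵐᵒᵖ {e})) = a • gen e := Subtype.ext (by simp [gen, ← ha])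
  rw [this, map_smul, map_smul, h]

/-- `Rᵐᵒᵖ`-linear maps out of `span {e}` from a vector `v`. -/
def psi {N : Type} [AddCommGroup N] [Module Rᵐᵒᵖ N] (v : N) :
    ↥(Submodule.span Rᵐᵒᵖ {e}) →ₗ[Rᵐᵒᵖ] N :=
  (rmul v).comp (Submodule.span Rᵐᵒᵖ {e}).subtype

lemma psi_gen {N : Type} [AddCommGroup N] [Module Rᵐᵒᵖ N] (v : N) :
    psi e v (gen e) = op e • v := rfl

/-- `R` is projective over `Rᵐᵒᵖ` -/
theorem projective_self_op : Module.Projective Rᵐᵒᵖ R := by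
  refine Module.Projective.of_equiv' (M := Rᵐᵒᵖ) ?_
  exact
  { toFun := unop
    invFun := op
    map_add' := fun _ _ => rfl
    map_smul' := fun _ _ => rfl
    left_inv := fun _ => rfl
    right_inv := fun _ => rfl }

/-- projectivity of `span {e}` -/
theorem projective_span_idem (he : IsIdempotentElem e) :
    Module.Projective Rᵐᵒᵖ ↥(Submodule.span Rᵐᵒᵖ {e}) := by
  have := projective_self_op (R := R)
  refine Module.Projective.of_split (Submodule.span Rᵐᵒᵖ {e}).subtype
    ((rmul (N := R) e).codRestrict _ (fun r => ?_)) ?_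
  · show e * r ∈ _
    rw [Submodule.mem_span_singleton]
    exact ⟨op r, rfl⟩
  · ext ⟨x, hx⟩
    show e * x = x
    exact e_mul_of_mem e he hx

end Alg

section Main
variable {k : Type} [Field k] {R : Type} [Ring R] [Algebra k R]
  {N : Type} [AddCommGroup N] [Module Rᵐᵒᵖ N] [Module k N] [IsScalarTower k Rᵐᵒᵖ N]

lemma smul_op_comm (c : k) (x : R) (v : N) : c • (op x • v) = op x • (c • v) := by
  rw [← algebraMap_smul Rᵐᵒᵖ c (op x • v), ← mul_smul, Algebra.commutes, mul_smul,
    algebraMap_smul]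

theorem surj_iff
    [FiniteDimensional k R]
    (ea eb : R) (hea : IsIdempotentElem ea) (heb : IsIdempotentElem eb)
    (f : ↥(Submodule.span Rᵐᵒᵖ {eb}) →ₗ[Rᵐᵒᵖ] ↥(Submodule.span Rᵐᵒᵖ {ea}))
    (hf : Function.Injective f)
    (hmin : ∀ h : ↥(Submodule.span Rᵐᵒᵖ {ea}) →ₗ[Rᵐᵒᵖ] ↥(Submodule.span Rᵐᵒᵖ {eb}),
      h.comp f ≠ LinearMap.id)
    (h2 : Module.rank k
      ↥(Submodule.span k {x : N | ∃ v : N, x = (op eb) • v}) ≤ 1)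
    (α : R) (hα : α = ea * α * eb)
    (h3 : Submodule.span k {x : R | ∃ r : R, x = ea * r * eb} = Submodule.span k {α}) :
    (Function.Surjective fun (φ : ↥(Submodule.span Rᵐᵒᵖ {ea}) →ₗ[Rᵐᵒᵖ] N) => φ.comp f) ↔
      ((∀ v : N, (op eb) • v = 0) ∨ (∃ v : N, (op α) • v ≠ 0)) := by
  classical
  set β : R := (f (gen eb) : R) with hβ
  have hβa : ea * β = β := e_mul_of_mem ea hea (f (gen eb)).2
  have hgenb : (op eb • gen eb : ↥(Submodule.span Rᵐᵒᵖ {eb})) = gen eb :=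
    Subtype.ext (by rw [smul_gen]; exact heb)
  have hβb : β * eb = β := by
    conv_rhs => rw [hβ, ← hgenb, map_smul]
    rfl
  have hfgen : f (gen eb) = op β • gen ea := Subtype.ext (by rw [smul_gen, hβa])
  -- β is a scalar multiple of α
  obtain ⟨c₀, hc₀⟩ : ∃ c₀ : k, β = c₀ • α := by
    have : β ∈ Submodule.span k {α} := by
      rw [← h3]
      exact Submodule.subset_span ⟨β, by rw [mul_assoc, hβb, hβa]⟩
    obtain ⟨c₀, hc₀⟩ := (Submodule.mem_span_singleton).mp this
    exact ⟨c₀, hc₀.symm⟩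
  -- β ≠ 0
  have hβ0 : β ≠ 0 := by
    intro h0
    by_cases hgen : gen eb = (0 : ↥(Submodule.span Rᵐᵒᵖ {eb}))
    · -- then `span {eb}` is trivial, contradicting minimality
      have hsub : ∀ y : ↥(Submodule.span Rᵐᵒᵖ {eb}), y = 0 := by
        rintro ⟨y, hy⟩
        obtain ⟨r, rfl⟩ := mem_span_idem eb hy
        have heb0 : eb = 0 := congrArg Subtype.val hgen
        exact Subtype.ext (show eb * r = 0 by rw [heb0, zero_mul])
      exact hmin 0 (LinearMap.ext fun y => (hsub _).trans (hsub _).symm)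
    · refine hgen (hf ?_)
      rw [map_zero]
      exact Subtype.ext h0
  have hc₀0 : c₀ ≠ 0 := fun h => hβ0 (by rw [hc₀, h, zero_smul])
  have hβfix : ∀ v : N, op eb • (op β • v) = op β • v := fun v => by
    rw [smul_smul]
    exact congrArg (· • v) (congrArg op hβb)
  obtain ⟨v₀, hv₀⟩ := rank_le_one_iff.mp h2
  constructor
  · intro hsurj
    by_cases hall : ∀ v : N, op eb • v = 0
    · exact Or.inl hall
    · push_neg at hall
      obtain ⟨w₀, hw₀⟩ := hall
      obtain ⟨φ, hφ⟩ := hsurj (psi eb (op eb • w₀))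
      refine Or.inr ⟨c₀ • φ (gen ea), ?_⟩
      have hval : op β • φ (gen ea) = op eb • w₀ := by
        have h := congrArg (fun (ψ : _ →ₗ[Rᵐᵒᵖ] N) => ψ (gen eb)) hφ
        simp only [LinearMap.comp_apply] at h
        rw [hfgen, map_smul] at h
        rw [h, psi_gen, smul_smul]
        exact congrArg (· • w₀) (congrArg op heb)
      intro hcon
      apply hw₀
      rw [← hval, hc₀, op_smul, smul_assoc, smul_op_comm, hcon]
  · intro hrhs ψ
    set w := ψ (gen eb) with hwdef
    have hwfix : op eb • w = w := by rw [hwdef, ← map_smul, hgenb]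
    rcases hrhs with hall | ⟨v₁, hv₁⟩
    · refine ⟨0, eq_of_gen_eq eb _ _ ?_⟩
      simp only [LinearMap.comp_apply, LinearMap.zero_apply]
      exact (hwfix.symm.trans (hall w)).symm
    · have hu : op β • v₁ ≠ 0 := by
        rw [hc₀, op_smul, smul_assoc]
        exact smul_ne_zero hc₀0 hv₁
      have huW : op β • v₁ ∈ Submodule.span k {x : N | ∃ v : N, x = (op eb) • v} :=
        Submodule.subset_span ⟨op β • v₁, (hβfix v₁).symm⟩
      have hwW : w ∈ Submodule.span k {x : N | ∃ v : N, x = (op eb) • v} :=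
        Submodule.subset_span ⟨w, hwfix.symm⟩
      obtain ⟨cu, hcu⟩ := hv₀ ⟨op β • v₁, huW⟩
      obtain ⟨cw, hcw⟩ := hv₀ ⟨w, hwW⟩
      have hcu' : cu • (v₀ : N) = op β • v₁ := congrArg Subtype.val hcu
      have hcw' : cw • (v₀ : N) = w := congrArg Subtype.val hcw
      have hcu0 : cu ≠ 0 := by
        intro h
        apply hu
        rw [← hcu', h, zero_smul]
      refine ⟨psi ea ((cw / cu) • v₁), eq_of_gen_eq eb _ _ ?_⟩
      simp only [LinearMap.comp_apply]
      rw [hfgen, map_smul, psi_gen, smul_smul]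
      rw [show op β * op ea = op β from (op_mul ea β).symm.trans (congrArg op hβa)]
      rw [← smul_op_comm, ← hcu', smul_smul, div_mul_cancel₀ _ hcu0, hcw']

end Main

noncomputable section Cat
open CategoryTheory Limits

variable {R : Type} [Ring R]

lemma ModuleCat.isZero_iff {A : Type} [Ring A] (X : ModuleCat A) :
    Limits.IsZero X ↔ Subsingleton X := by
  constructor
  · intro h
    exact ((forget _).mapIso (h.iso
      (ModuleCat.isZero_of_subsingleton (ModuleCat.of A PUnit)))).toEquiv.subsingleton_congr.mpr
      (inferInstanceAs (Subsingleton PUnit))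
  · intro h
    exact ModuleCat.isZero_of_subsingleton X

variable (ea eb : R)

/-- the objects of the 2-term resolution -/
def XX : ℕ → ModuleCat Rᵐᵒᵖ
  | 0 => ModuleCat.of Rᵐᵒᵖ ↥(Submodule.span Rᵐᵒᵖ {ea})
  | 1 => ModuleCat.of Rᵐᵒᵖ ↥(Submodule.span Rᵐᵒᵖ {eb})
  | _ + 2 => ModuleCat.of Rᵐᵒᵖ PUnit

variable (f : ↥(Submodule.span Rᵐᵒᵖ {eb}) →ₗ[Rᵐᵒᵖ] ↥(Submodule.span Rᵐᵒᵖ {ea}))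

/-- the differentials of the 2-term resolution -/
def dd : ∀ n : ℕ, XX ea eb (n + 1) ⟶ XX ea eb n
  | 0 => ModuleCat.ofHom f
  | _ + 1 => 0

/-- the 2-term resolution as a chain complex -/
def cpx : ChainComplex (ModuleCat Rᵐᵒᵖ) ℕ :=
  ChainComplex.of (XX ea eb) (dd ea eb f) (fun _ => zero_comp)

lemma cpx_d_one_zero : (cpx ea eb f).d 1 0 = ModuleCat.ofHom f := ChainComplex.of_d (XX ea eb) (dd ea eb f) 0

lemma cpx_d_two_one : (cpx ea eb f).d 2 1 = 0 := ChainComplex.of_d (XX ea eb) (dd ea eb f) 1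

lemma cpx_exactAt_succ_succ (n : ℕ) : (cpx ea eb f).ExactAt (n + 2) := by
  rw [HomologicalComplex.exactAt_iff' _ (n + 3) (n + 2) (n + 1) (by simp) (by simp)]
  exact ShortComplex.exact_of_isZero_X₂ _
    (ModuleCat.isZero_of_subsingleton (ModuleCat.of Rᵐᵒᵖ PUnit))

lemma cpx_exactAt_one (hf : Function.Injective f) : (cpx ea eb f).ExactAt 1 := by
  rw [HomologicalComplex.exactAt_iff' _ 2 1 0 (by simp) (by simp)]
  rw [ShortComplex.exact_iff_mono _ (cpx_d_two_one ea eb f)]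
  show Mono ((cpx ea eb f).d 1 0)
  rw [cpx_d_one_zero]
  exact (ModuleCat.mono_iff_injective _).mpr hf

end Cat

noncomputable section Cat2
open CategoryTheory Limits

variable {R : Type} [Ring R] (ea eb : R)
  {M : Type} [AddCommGroup M] [Module Rᵐᵒᵖ M]
  (f : ↥(Submodule.span Rᵐᵒᵖ {eb}) →ₗ[Rᵐᵒᵖ] ↥(Submodule.span Rᵐᵒᵖ {ea}))
  (g : ↥(Submodule.span Rᵐᵒᵖ {ea}) →ₗ[Rᵐᵒᵖ] M)

/-- the projective resolution of `M` -/
def pres (hea : IsIdempotentElem ea) (heb : IsIdempotentElem eb)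
    (hf : Function.Injective f) (hfg : Function.Exact f g) (hg : Function.Surjective g) :
    ProjectiveResolution (ModuleCat.of Rᵐᵒᵖ M) where
  complex := cpx ea eb f
  projective n := by
    match n with
    | 0 => exact (IsProjective.iff_projective _).mp (projective_span_idem ea hea)
    | 1 => exact (IsProjective.iff_projective _).mp (projective_span_idem eb heb)
    | n + 2 =>
      refine (IsProjective.iff_projective _).mp ?_
      have := projective_self_op (R := R)
      exact Module.Projective.of_split (M := R) 0 0
        (LinearMap.ext fun x => Subsingleton.elim _ _)
  π := (ChainComplex.toSingle₀Equiv _ _).symm ⟨ModuleCat.ofHom g, by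
    rw [cpx_d_one_zero]
    exact ModuleCat.hom_ext (LinearMap.ext fun x => hfg.apply_apply_eq_zero x)⟩
  quasiIso := ⟨fun n => by
    match n with
    | 0 =>
      rw [ChainComplex.quasiIsoAt₀_iff, ShortComplex.quasiIso_iff_of_zeros']
      rotate_left
      · exact (cpx ea eb f).shape 0 0 (by simp)
      · rfl
      · rfl
      · have Snice : ShortComplex (ModuleCat Rᵐᵒᵖ) :=
          ShortComplex.mk (show XX ea eb 1 ⟶ XX ea eb 0 from ModuleCat.ofHom f)
            (show XX ea eb 0 ⟶ ModuleCat.of Rᵐᵒᵖ M from ModuleCat.ofHom g)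
            (ModuleCat.hom_ext (LinearMap.ext fun x => hfg.apply_apply_eq_zero x))
        refine (ShortComplex.exact_and_epi_g_iff_of_iso
          (S₂ := ShortComplex.mk (show XX ea eb 1 ⟶ XX ea eb 0 from ModuleCat.ofHom f)
            (show XX ea eb 0 ⟶ ModuleCat.of Rᵐᵒᵖ M from ModuleCat.ofHom g)
            (ModuleCat.hom_ext (LinearMap.ext fun x => hfg.apply_apply_eq_zero x))) ?_).2 ⟨?_, ?_⟩
        · refine ShortComplex.isoMk (Iso.refl _) (Iso.refl _) (Iso.refl _) ?_ ?_
          · exact (Category.id_comp _).trans (Category.comp_id _).symm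
          · erw [Category.id_comp]
        · refine (ShortComplex.moduleCat_exact_iff _).mpr (fun x hx => ?_)
          exact (hfg x).mp hx
        · exact (ModuleCat.epi_iff_surjective _).mpr hg
    | n + 1 =>
      rw [quasiIsoAt_iff_exactAt']
      · match n with
        | 0 => exact cpx_exactAt_one ea eb f hf
        | n + 1 => exact cpx_exactAt_succ_succ ea eb f n
      · apply ChainComplex.exactAt_succ_single_obj⟩

end Cat2

noncomputable section Cat3
open CategoryTheory Limits

variable {R : Type} [Ring R] (ea eb : R)
  {M N : Type} [AddCommGroup M] [Module Rᵐᵒᵖ M] [AddCommGroup N] [Module Rᵐᵒᵖ N]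
  (f : ↥(Submodule.span Rᵐᵒᵖ {eb}) →ₗ[Rᵐᵒᵖ] ↥(Submodule.span Rᵐᵒᵖ {ea}))
  (g : ↥(Submodule.span Rᵐᵒᵖ {ea}) →ₗ[Rᵐᵒᵖ] M)

theorem subsingleton_ext_iff_surj (hea : IsIdempotentElem ea) (heb : IsIdempotentElem eb)
    (hf : Function.Injective f) (hfg : Function.Exact f g) (hg : Function.Surjective g) :
    Subsingleton (((Ext ℤ (ModuleCat Rᵐᵒᵖ) 1).obj
        (Opposite.op (ModuleCat.of Rᵐᵒᵖ M))).obj (ModuleCat.of Rᵐᵒᵖ N)) ↔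
      Function.Surjective
        (fun (φ : ↥(Submodule.span Rᵐᵒᵖ {ea}) →ₗ[Rᵐᵒᵖ] N) => φ.comp f) := by
  let P := pres ea eb f g hea heb hf hfg hg
  have e1 := ((forget _).mapIso (P.isoExt (R := ℤ) 1 (ModuleCat.of Rᵐᵒᵖ N))).toEquiv.subsingleton_congr
  refine e1.trans ?_
  have hPc : P.complex = cpx ea eb f := rfl
  rw [hPc]
  set Q := (cpx ea eb f).linearYonedaObj ℤ (ModuleCat.of Rᵐᵒᵖ N) with hQ
  refine ((ModuleCat.isZero_iff _).symm.trans
    (HomologicalComplex.exactAt_iff_isZero_homology Q 1).symm).trans ?_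
  rw [HomologicalComplex.exactAt_iff' Q 0 1 2 (by simp) (by simp)]
  have hsub : Subsingleton ((Q.sc' 0 1 2).X₃) :=
    show Subsingleton (ModuleCat.of Rᵐᵒᵖ PUnit ⟶ ModuleCat.of Rᵐᵒᵖ N) from
      ⟨fun a b => ModuleCat.hom_ext (LinearMap.ext fun x => by
        rw [Subsingleton.elim x 0, map_zero, map_zero])⟩
  have hg0 : (Q.sc' 0 1 2).g = 0 :=
    (ModuleCat.isZero_of_subsingleton _).eq_of_tgt _ 0
  rw [ShortComplex.exact_iff_epi _ hg0]
  have hfun : ∀ φ : XX ea eb 0 ⟶ ModuleCat.of Rᵐᵒᵖ N,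
      ((Q.sc' 0 1 2).f φ : XX ea eb 1 ⟶ ModuleCat.of Rᵐᵒᵖ N).hom = φ.hom.comp f := by
    intro φ
    show ((cpx ea eb f).d 1 0 ≫ φ).hom = φ.hom.comp f
    rw [cpx_d_one_zero]
    rfl
  rw [ModuleCat.epi_iff_surjective]
  constructor
  · intro h ψ
    obtain ⟨φ, hφ⟩ := h (ModuleCat.ofHom ψ : XX ea eb 1 ⟶ ModuleCat.of Rᵐᵒᵖ N)
    exact ⟨(φ : XX ea eb 0 ⟶ ModuleCat.of Rᵐᵒᵖ N).hom, (hfun φ).symm.trans (congrArg ModuleCat.Hom.hom hφ)⟩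
  · intro h ψ
    obtain ⟨φ, hφ⟩ := h (ψ : XX ea eb 1 ⟶ ModuleCat.of Rᵐᵒᵖ N).hom
    exact ⟨(ModuleCat.ofHom φ : XX ea eb 0 ⟶ ModuleCat.of Rᵐᵒᵖ N),
      ModuleCat.hom_ext ((hfun _).trans hφ)⟩

end Cat3


theorem ext_one_vanishing_criterion
    {k : Type} [Field k] {R : Type} [Ring R] [Algebra k R] [FiniteDimensional k R]
    (ea eb : R) (hea : IsIdempotentElem ea) (heb : IsIdempotentElem eb)
    {M N : Type} [AddCommGroup M] [Module Rᵐᵒᵖ M] [AddCommGroup N] [Module Rᵐᵒᵖ N]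
    [Module k N] [IsScalarTower k Rᵐᵒᵖ N]
    -- (1) a minimal projective resolution `0 → e_b R → e_a R → M → 0`
    (f : ↥(Submodule.span Rᵐᵒᵖ {eb}) →ₗ[Rᵐᵒᵖ] ↥(Submodule.span Rᵐᵒᵖ {ea}))
    (g : ↥(Submodule.span Rᵐᵒᵖ {ea}) →ₗ[Rᵐᵒᵖ] M)
    (hf : Function.Injective f) (hfg : Function.Exact f g) (hg : Function.Surjective g)
    (hmin : ∀ h : ↥(Submodule.span Rᵐᵒᵖ {ea}) →ₗ[Rᵐᵒᵖ] ↥(Submodule.span Rᵐᵒᵖ {eb}),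
      h.comp f ≠ LinearMap.id)  -- minimality of the resolution
    -- (2) `dim_k (N e_b) ≤ 1`
    (h2 : Module.rank k
      ↥(Submodule.span k {x : N | ∃ v : N, x = (op eb) • v}) ≤ 1)
    -- (3) `α` spans `e_a R e_b` over `k`
    (α : R) (hα : α = ea * α * eb)
    (h3 : Submodule.span k {x : R | ∃ r : R, x = ea * r * eb} = Submodule.span k {α}) :
    Subsingleton (((Ext ℤ (ModuleCat Rᵐᵒᵖ) 1).obj
        (Opposite.op (ModuleCat.of Rᵐᵒᵖ M))).obj (ModuleCat.of Rᵐᵒᵖ N)) ↔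
      ((∀ v : N, (op eb) • v = 0) ∨ (∃ v : N, (op α) • v ≠ 0)) := by
  exact (subsingleton_ext_iff_surj ea eb f g hea heb hf hfg hg).trans
    (surj_iff ea eb hea heb f hf hmin h2 α hα h3)
end

section
/- Matrix mutation can be written as a conjugation-type formula: for a skew-symmetrizable n×n integer matrix B with skew-symmetrizer D, an index k, and a sign θ = ±1, define E = E_{B,k,θ} by e_{ij} = δ_{ij} for j ≠ k, e_{kk} = −1, e_{ik} = max(0, −θ b_{ik}) for i ≠ k, and define F = F_{B,k,θ} by f_{ij} = δ_{ij} for j ≠ k, f_{kk} = −1, f_{kj} = max(0, θ b_{kj}) for j ≠ k. Then μ_k(B) = E^{−1} B F, and moreover F = D^{−1} (E^t)^{−1} D. -/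
/-!
Matrix mutation as a conjugation-type formula (Nakanishi–Zelevinsky / Keller):
`μ_k(B) = E⁻¹ B F` and `F = D⁻¹ (Eᵀ)⁻¹ D`.
-/

open Matrix

variable {n : ℕ}

/-- Fomin–Zelevinsky matrix mutation at the index `k`. -/
def mutate (B : Matrix (Fin n) (Fin n) ℤ) (k : Fin n) : Matrix (Fin n) (Fin n) ℤ :=
  Matrix.of fun i j =>
    if i = k ∨ j = k then -B i j
    else B i j + (B i k).sign * max 0 (B i k * B k j)

/-- The matrix `E_{B,k,θ}`. -/
def Emat (B : Matrix (Fin n) (Fin n) ℤ) (k : Fin n) (θ : ℤ) : Matrix (Fin n) (Fin n) ℤ :=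
  Matrix.of fun i j =>
    if j = k then (if i = k then -1 else max 0 (-θ * B i k))
    else (if i = j then 1 else 0)

/-- The matrix `F_{B,k,θ}`. -/
def Fmat (B : Matrix (Fin n) (Fin n) ℤ) (k : Fin n) (θ : ℤ) : Matrix (Fin n) (Fin n) ℤ :=
  Matrix.of fun i j =>
    if i = k then (if j = k then -1 else max 0 (θ * B k j))
    else (if i = j then 1 else 0)

lemma key1 (a b : ℤ) : max 0 (-a) * b + a * max 0 b = a.sign * max 0 (a*b) := by
  rcases lt_trichotomy a 0 with ha|rfl|ha
  · rw [Int.sign_eq_neg_one_of_neg ha, max_eq_right (by linarith : (0:ℤ) ≤ -a)]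
    rcases le_or_gt b 0 with hb|hb
    · rw [max_eq_left hb, max_eq_right (by nlinarith : (0:ℤ) ≤ a*b)]; ring
    · rw [max_eq_right hb.le, max_eq_left (by nlinarith : a*b ≤ 0)]; ring
  · simp
  · rw [Int.sign_eq_one_of_pos ha, max_eq_left (by linarith : -a ≤ 0)]
    rcases le_or_gt b 0 with hb|hb
    · rw [max_eq_left hb, max_eq_left (by nlinarith : a*b ≤ 0)]; ring
    · rw [max_eq_right hb.le, max_eq_right (by nlinarith : (0:ℤ) ≤ a*b)]; ring

lemma max_neg_add (x : ℤ) : max 0 x = x + max 0 (-x) := by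
  rcases le_total 0 x with h|h
  · rw [max_eq_right h, max_eq_left (by linarith)]; ring
  · rw [max_eq_left h, max_eq_right (by linarith)]; ring

lemma key (θ a b : ℤ) (hθ : θ = 1 ∨ θ = -1) :
    max 0 (-θ * a) * b + a * max 0 (θ * b) = a.sign * max 0 (a * b) := by
  rcases hθ with rfl|rfl
  · simpa using key1 a b
  · have := key1 a b
    rw [show (-(-1)*a : ℤ) = a by ring, show ((-1)*b : ℤ) = -b by ring,
      max_neg_add a, max_neg_add (-b)]
    rw [show (-(-b) : ℤ) = b by ring]
    nlinarith [this]

def uvec {n : ℕ} (B : Matrix (Fin n) (Fin n) ℤ) (k : Fin n) (θ : ℤ) (i : Fin n) : ℤ :=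
  if i = k then -2 else max 0 (-θ * B i k)

def wvec {n : ℕ} (B : Matrix (Fin n) (Fin n) ℤ) (k : Fin n) (θ : ℤ) (j : Fin n) : ℤ :=
  if j = k then -2 else max 0 (θ * B k j)

lemma Emat_mul {n : ℕ} (B M : Matrix (Fin n) (Fin n) ℤ) (k : Fin n) (θ : ℤ) (i j : Fin n) :
    (Emat B k θ * M) i j = M i j + uvec B k θ i * M k j := by
  rw [mul_apply]
  have h : ∀ p : Fin n, Emat B k θ i p * M p j =
      (if i = p then M p j else 0) + (if k = p then uvec B k θ i * M p j else 0) := by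
    intro p
    by_cases hp : p = k
    · subst hp
      by_cases hik : i = p <;> simp [Emat, uvec, hik] <;> ring
    · have : ¬ (k = p) := fun h => hp h.symm
      by_cases hik : i = p <;> simp [Emat, uvec, hp, hik, this]
  rw [Finset.sum_congr rfl (fun p _ => h p), Finset.sum_add_distrib,
    Finset.sum_ite_eq, Finset.sum_ite_eq]
  simp

lemma mul_Fmat {n : ℕ} (B M : Matrix (Fin n) (Fin n) ℤ) (k : Fin n) (θ : ℤ) (i j : Fin n) :
    (M * Fmat B k θ) i j = M i j + M i k * wvec B k θ j := by
  rw [mul_apply]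
  have h : ∀ p : Fin n, M i p * Fmat B k θ p j =
      (if p = j then M i p else 0) + (if p = k then M i p * wvec B k θ j else 0) := by
    intro p
    by_cases hp : p = k
    · subst hp
      by_cases hjk : j = p
      · simp [Fmat, wvec, hjk]; ring
      · have hpj : p ≠ j := fun h => hjk h.symm
        simp [Fmat, wvec, hjk, hpj]
    · by_cases hpj : p = j
      · subst hpj; simp [Fmat, wvec, hp]
      · simp [Fmat, wvec, hp, hpj]
  rw [Finset.sum_congr rfl (fun p _ => h p), Finset.sum_add_distrib,
    Finset.sum_ite_eq', Finset.sum_ite_eq']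
  simp

/-- For a skew-symmetrizable integer matrix `B` with skew-symmetrizer `D` (a diagonal
matrix with positive integer diagonal entries such that `DB = -BᵀD`), any index `k` and
any sign `θ = ±1`, one has `μ_k(B) = E_{B,k,θ}⁻¹ * B * F_{B,k,θ}`, and moreover
`F_{B,k,θ} = D⁻¹ (E_{B,k,θ}ᵀ)⁻¹ D` (an identity of rational matrices). -/
theorem mutation_conjugation_formula (B D : Matrix (Fin n) (Fin n) ℤ)
    (hDdiag : ∀ i j, i ≠ j → D i j = 0) (hDpos : ∀ i, 0 < D i i)
    (hskew : D * B = -(Bᵀ * D)) (k : Fin n) (θ : ℤ) (hθ : θ = 1 ∨ θ = -1) :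
    mutate B k = (Emat B k θ)⁻¹ * B * Fmat B k θ ∧
      (Fmat B k θ).map (Int.cast : ℤ → ℚ) =
        (D.map (Int.cast : ℤ → ℚ))⁻¹ * (((Emat B k θ).map (Int.cast : ℤ → ℚ))ᵀ)⁻¹ *
          D.map (Int.cast : ℤ → ℚ) := by
  have hDmul : ∀ (M : Matrix (Fin n) (Fin n) ℤ) (i j : Fin n), (D * M) i j = D i i * M i j := by
    intro M i j; rw [mul_apply]
    exact Finset.sum_eq_single i (fun p _ hp => by rw [hDdiag i p (Ne.symm hp), zero_mul])
      (fun h => absurd (Finset.mem_univ i) h)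
  have hmulD : ∀ (M : Matrix (Fin n) (Fin n) ℤ) (i j : Fin n), (M * D) i j = M i j * D j j := by
    intro M i j; rw [mul_apply]
    exact Finset.sum_eq_single j (fun p _ hp => by rw [hDdiag p j hp, mul_zero])
      (fun h => absurd (Finset.mem_univ j) h)
  have hsk : ∀ i j, D i i * B i j = -(B j i * D j j) := by
    intro i j
    have h := congrFun (congrFun hskew i) j
    rw [neg_apply] at h
    rw [← hDmul B i j, h, hmulD Bᵀ i j, transpose_apply]
  have hBkk : B k k = 0 := by
    have h := hsk k k
    have h2 : D k k * B k k = 0 := by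
      have := mul_comm (B k k) (D k k); linarith
    rcases mul_eq_zero.1 h2 with h3 | h3
    · exact absurd h3 (hDpos k).ne'
    · exact h3
  have hEE : Emat B k θ * Emat B k θ = 1 := by
    ext i j
    rw [Emat_mul]
    by_cases hj : j = k
    · by_cases hi : i = k <;> simp [Emat, uvec, Matrix.one_apply, hi, hj] <;> ring
    · have hkj : ¬ k = j := fun h => hj h.symm
      by_cases hi : i = j <;> simp [Emat, uvec, Matrix.one_apply, hj, hi, hkj]
  have hEBF : mutate B k = Emat B k θ * B * Fmat B k θ := by
    ext i j
    rw [mul_Fmat, Emat_mul, Emat_mul]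
    by_cases hi : i = k
    · by_cases hj : j = k <;> simp [mutate, uvec, wvec, hi, hj, hBkk] <;> ring
    · by_cases hj : j = k
      · simp [mutate, uvec, wvec, hi, hj, hBkk]; ring
      · simp [mutate, uvec, wvec, hi, hj, hBkk]
        have hkey := key θ (B i k) (B k j) hθ
        rw [neg_mul] at hkey
        linarith
  refine ⟨by rw [Matrix.inv_eq_right_inv hEE]; exact hEBF, ?_⟩
  have hDF : D * Fmat B k θ = (Emat B k θ)ᵀ * D := by
    ext i j
    rw [hDmul, hmulD, transpose_apply]
    by_cases hi : i = k
    · by_cases hj : j = k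
      · simp [Fmat, Emat, hi, hj]
      · have hx : D k k * max 0 (θ * B k j) = max 0 (-(θ * B j k)) * D j j := by
          have h3 : (θ * B k j) * D k k = (-(θ * B j k)) * D j j := by
            calc (θ * B k j) * D k k = θ * (D k k * B k j) := by ring
              _ = θ * (-(B j k * D j j)) := by rw [hsk k j]
              _ = (-(θ * B j k)) * D j j := by ring
          calc D k k * max 0 (θ * B k j)
              = max 0 (θ * B k j) * D k k := mul_comm _ _
            _ = max (0 * D k k) ((θ * B k j) * D k k) := max_mul_of_nonneg _ _ (hDpos k).le
            _ = max (0 * D j j) ((-(θ * B j k)) * D j j) := by rw [h3, zero_mul, zero_mul]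
            _ = max 0 (-(θ * B j k)) * D j j := (max_mul_of_nonneg _ _ (hDpos j).le).symm
        simp [Fmat, Emat, hi, hj]
        linarith [hx]
    · by_cases hj : j = k
      · have hki : ¬ k = i := fun h => hi h.symm
        simp [Fmat, Emat, hi, hj, hki]
      · by_cases hij : i = j
        · simp [Fmat, Emat, hi, hj, hij]
        · have hji : ¬ j = i := fun h => hij h.symm
          simp [Fmat, Emat, hi, hj, hij, hji]
  set c : ℤ → ℚ := (Int.cast : ℤ → ℚ) with hc
  have mapmul : ∀ (X Y : Matrix (Fin n) (Fin n) ℤ),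
      (X * Y).map c = X.map c * Y.map c := by
    intro X Y; ext i j
    simp [hc, Matrix.map_apply, Matrix.mul_apply]
  have mapone : (1 : Matrix (Fin n) (Fin n) ℤ).map c = 1 := by
    ext i j; by_cases h : i = j <;> simp [hc, Matrix.map_apply, Matrix.one_apply, h]
  have hEq1 : (Emat B k θ).map c * (Emat B k θ).map c = 1 := by
    rw [← mapmul, hEE, mapone]
  have hET : ((Emat B k θ).map c)ᵀ * ((Emat B k θ).map c)ᵀ = 1 := by
    rw [← transpose_mul, hEq1, transpose_one]
  set D' : Matrix (Fin n) (Fin n) ℚ := Matrix.of fun i j => if i = j then ((D i i : ℚ))⁻¹ else 0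
    with hD'
  have hDD' : D.map c * D' = 1 := by
    ext i j
    rw [mul_apply]
    rw [Finset.sum_eq_single j (fun p _ hp => by simp [hD', hp])
      (fun h => absurd (Finset.mem_univ j) h)]
    by_cases h : i = j
    · subst h
      simp [hD', hc, Matrix.map_apply, Matrix.one_apply,
        mul_inv_cancel₀ (show ((D i i : ℚ)) ≠ 0 by exact_mod_cast (hDpos i).ne')]
    · simp [hD', hc, Matrix.map_apply, Matrix.one_apply, h, hDdiag i j h]
  have hD'D : D' * D.map c = 1 := by
    ext i j
    rw [mul_apply]
    rw [Finset.sum_eq_single i (fun p _ hp => by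
        have h2 : ¬ i = p := fun h => hp h.symm
        simp [hD', h2])
      (fun h => absurd (Finset.mem_univ i) h)]
    by_cases h : i = j
    · subst h
      simp [hD', hc, Matrix.map_apply, Matrix.one_apply,
        inv_mul_cancel₀ (show ((D i i : ℚ)) ≠ 0 by exact_mod_cast (hDpos i).ne')]
    · simp [hD', hc, Matrix.map_apply, Matrix.one_apply, h, hDdiag i j h]
  rw [Matrix.inv_eq_right_inv hET, Matrix.inv_eq_right_inv hDD']
  have hq : D.map c * (Fmat B k θ).map c = ((Emat B k θ)ᵀ).map c * D.map c := by
    rw [← mapmul, ← mapmul, hDF]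
  have htm : ((Emat B k θ).map c)ᵀ = ((Emat B k θ)ᵀ).map c := (Matrix.transpose_map).symm
  calc (Fmat B k θ).map c
      = 1 * (Fmat B k θ).map c := (one_mul _).symm
    _ = D' * D.map c * (Fmat B k θ).map c := by rw [hD'D]
    _ = D' * (D.map c * (Fmat B k θ).map c) := by rw [mul_assoc]
    _ = D' * (((Emat B k θ)ᵀ).map c * D.map c) := by rw [hq]
    _ = D' * ((Emat B k θ).map c)ᵀ * D.map c := by rw [htm, mul_assoc]
end
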